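/- Let ε be a primitive idempotent of R_n with σ(ε) ≠ ε, and set e = (ε, 0), ē = (σ(ε), 0) ∈ A_n. Then e + ē is a central idempotent of A_n; K := R_n/(1−ε)R_n is a finite field (a field extension of F); and there exists an injective F-linear multiplicative map Φ : M₂(K) → A_n with Φ(I₂) = e + ē, whose image is the two-sided ideal A_n(e + ē), and which satisfies bar(Φ(m)) = Φ(adjugate(m)) for every m ∈ M₂(K), i.e. the bar-image of Φ([[a,b],[c,d]]) is Φ([[d,−b],[−c,a]]). -/

import Mathlib

/-!
Write `K = R_n ⧸ (1 - ε)`. The distinct primitive idempotents `ε` and `σ ε` are orthogonal, and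
`r ↦ ε r` identifies `K` with the ideal `ε R_n`. That ideal is reduced (`n` is invertible in `F`,
so `X ^ n - 1` is separable) and, by primitivity, its only idempotents are `0` and `ε`; a finite
reduced ring without nontrivial idempotents is a field. The map
`[[a, b], [c, d]] ↦ (ε a + σ (ε d), ε b - σ (ε c))` is multiplicative because every cross term
carries the factor `ε σ ε = 0`, and `z ↦ [[z₁, z₂], [-σ z₂, σ z₁]]` (entries reduced mod `1 - ε`)
is a left inverse of it whose composite in the other order is right multiplication by `e + ē`.
-/

open Polynomial

noncomputable section

namespace CDC

/-- the consta-dihedral multiplication `(a,b)·(c,d) = (ac − b·σ(d), ad + b·σ(c))`. -/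
def cdMul {R : Type*} [CommRing R] (σ : R → R) (z w : R × R) : R × R :=
  (z.1 * w.1 - z.2 * σ w.2, z.1 * w.2 + z.2 * σ w.1)

/-- an idempotent `ε ≠ 0` is primitive if it is not the sum of two nonzero orthogonal
idempotents. -/
def IsPrimitiveIdem {R : Type*} [CommRing R] (ε : R) : Prop :=
  IsIdempotentElem ε ∧ ε ≠ 0 ∧
    ¬ ∃ ε' ε'' : R, IsIdempotentElem ε' ∧ IsIdempotentElem ε'' ∧ ε' ≠ 0 ∧ ε'' ≠ 0 ∧
      ε' * ε'' = 0 ∧ ε = ε' + ε''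

theorem isField_of_forall_isIdempotentElem {K : Type*} [CommRing K] [IsArtinianRing K]
    [IsReduced K] [Nontrivial K] (h : ∀ e : K, IsIdempotentElem e → e = 0 ∨ e = 1) :
    IsField K := by
  rw [← PrimeSpectrum.subsingleton_iff_isField_of_isReduced]
  obtain ⟨p, hp⟩ := Ideal.exists_maximal K
  have hunique : ∀ q : PrimeSpectrum K, q.asIdeal = p := by
    intro q
    by_contra hne
    obtain ⟨r, hrp, hr, hrq⟩ := IsArtinianRing.exists_not_mem_forall_mem_of_ne p
    rcases h r hr with rfl | rfl
    · exact hrp p.zero_mem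
    · exact q.2.ne_top ((Ideal.eq_top_iff_one _).mpr (hrq _ q.2 hne))
  exact ⟨fun q q' => PrimeSpectrum.ext ((hunique q).trans (hunique q').symm)⟩

section Idempotent

variable {R : Type*} [CommRing R] {ε : R}

theorem mem_span_one_sub_iff (hε : IsIdempotentElem ε) {x : R} :
    x ∈ Ideal.span {1 - ε} ↔ ε * x = 0 := by
  rw [Ideal.mem_span_singleton']
  constructor
  · rintro ⟨a, rfl⟩
    linear_combination (-a) * hε.eq
  · exact fun h => ⟨x, by linear_combination -h⟩

theorem mk_eq_mk_iff (hε : IsIdempotentElem ε) {x y : R} :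
    Ideal.Quotient.mk (Ideal.span {1 - ε}) x = Ideal.Quotient.mk _ y ↔ ε * x = ε * y := by
  rw [Ideal.Quotient.eq, mem_span_one_sub_iff hε, mul_sub, sub_eq_zero]

/-- Identifies `R ⧸ (1 - ε)` with the ideal `εR`: multiplicative, but it sends `1` to `ε`. -/
def quotSection (hε : IsIdempotentElem ε) : R ⧸ Ideal.span {1 - ε} →ₗ[R] R :=
  Submodule.liftQ _ (LinearMap.mulLeft R ε) fun _ hx => (mem_span_one_sub_iff hε).mp hx

variable (hε : IsIdempotentElem ε)
include hε

@[simp]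
theorem quotSection_mk (x : R) : quotSection hε (Ideal.Quotient.mk _ x) = ε * x := rfl

@[simp]
theorem mk_quotSection (k : R ⧸ Ideal.span {1 - ε}) :
    Ideal.Quotient.mk _ (quotSection hε k) = k := by
  obtain ⟨x, rfl⟩ := Ideal.Quotient.mk_surjective k
  rw [quotSection_mk, mk_eq_mk_iff hε, ← mul_assoc, hε.eq]

theorem quotSection_mul (k k' : R ⧸ Ideal.span {1 - ε}) :
    quotSection hε (k * k') = quotSection hε k * quotSection hε k' := by
  obtain ⟨x, rfl⟩ := Ideal.Quotient.mk_surjective k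
  obtain ⟨y, rfl⟩ := Ideal.Quotient.mk_surjective k'
  rw [← map_mul, quotSection_mk, quotSection_mk, quotSection_mk]
  linear_combination (-(x * y)) * hε.eq

@[simp]
theorem quotSection_one : quotSection hε 1 = ε := mul_one ε

theorem mul_quotSection (k : R ⧸ Ideal.span {1 - ε}) :
    ε * quotSection hε k = quotSection hε k := by
  obtain ⟨x, rfl⟩ := Ideal.Quotient.mk_surjective k
  rw [quotSection_mk, ← mul_assoc, hε.eq]

theorem isReduced_quotient_span_one_sub [IsReduced R] : IsReduced (R ⧸ Ideal.span {1 - ε}) := by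
  refine ⟨fun k ⟨m, hm⟩ => ?_⟩
  obtain ⟨x, rfl⟩ := Ideal.Quotient.mk_surjective k
  rw [← map_pow, ← map_zero (Ideal.Quotient.mk _), mk_eq_mk_iff hε, mul_zero] at hm
  rw [← map_zero (Ideal.Quotient.mk _), mk_eq_mk_iff hε, mul_zero]
  refine IsReduced.eq_zero _ ⟨m + 1, ?_⟩
  rw [mul_pow, hε.pow_succ_eq, pow_succ, ← mul_assoc, hm, zero_mul]

end Idempotent

namespace IsPrimitiveIdem

variable {R : Type*} [CommRing R] {ε : R} (hε : IsPrimitiveIdem ε)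
include hε

theorem mul_eq_zero_or_eq {η : R} (hη : IsIdempotentElem η) : ε * η = 0 ∨ ε * η = ε := by
  obtain ⟨hidem, -, hprim⟩ := hε
  by_contra! h
  refine hprim ⟨ε * η, ε - ε * η, hidem.mul hη, ?_, h.1, sub_ne_zero.mpr h.2.symm, ?_, by ring⟩
  · simpa only [mul_sub, mul_one] using hidem.mul hη.one_sub
  · linear_combination (η - η * η) * hidem.eq - ε * hη.eq

theorem nontrivial_quotient : Nontrivial (R ⧸ Ideal.span {1 - ε}) :=
  Ideal.Quotient.nontrivial_iff.mpr <| by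
    rw [ne_eq, Ideal.eq_top_iff_one, mem_span_one_sub_iff hε.1, mul_one]
    exact hε.2.1

theorem eq_zero_or_one_of_isIdempotentElem_quotient {k : R ⧸ Ideal.span {1 - ε}}
    (hk : IsIdempotentElem k) : k = 0 ∨ k = 1 := by
  obtain ⟨x, rfl⟩ := Ideal.Quotient.mk_surjective k
  have hx : ε * (x * x) = ε * x := (mk_eq_mk_iff hε.1).mp (by rw [map_mul]; exact hk.eq)
  have hεx : IsIdempotentElem (ε * x) := by
    show ε * x * (ε * x) = ε * x
    linear_combination (x * x) * hε.1.eq + hx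
  rw [← map_zero (Ideal.Quotient.mk _), ← map_one (Ideal.Quotient.mk _), mk_eq_mk_iff hε.1,
    mk_eq_mk_iff hε.1, mul_zero, mul_one]
  simpa only [← mul_assoc, hε.1.eq] using hε.mul_eq_zero_or_eq hεx

theorem mul_apply_eq_zero {σ : R →+* R} (hσ : ∀ r, σ (σ r) = r) (hne : σ ε ≠ ε) :
    ε * σ ε = 0 := by
  refine (hε.mul_eq_zero_or_eq (hε.1.map σ)).resolve_right fun h => hne ?_
  calc σ ε = σ (ε * σ ε) := by rw [h]
    _ = ε := by rw [map_mul, hσ, mul_comm, h]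

end IsPrimitiveIdem

section CyclicAlgebra

variable {F : Type*} [Field F] {n : ℕ}

theorem natCast_ne_zero_of_coprime_card [Fintype F] (h : Nat.Coprime n (Fintype.card F)) :
    (n : F) ≠ 0 := by
  have := (Nat.isCoprime_iff_coprime.mpr h).map (Int.castRingHom F)
  simp only [eq_intCast, Int.cast_natCast, FiniteField.cast_card_eq_zero,
    isCoprime_zero_right] at this
  exact this.ne_zero

theorem isReduced_adjoinRoot_X_pow_sub_one (hn : (n : F) ≠ 0) :
    IsReduced (AdjoinRoot (X ^ n - 1 : F[X])) := by
  have hsep : (X ^ n - 1 : F[X]).Separable := by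
    simpa using separable_X_pow_sub_C (1 : F) hn one_ne_zero
  exact (Ideal.isRadical_iff_quotient_reduced _).mp
    (isRadical_iff_span_singleton.mp hsep.squarefree.isRadical)

theorem finite_adjoinRoot_X_pow_sub_one [Finite F] (hn : n ≠ 0) :
    Finite (AdjoinRoot (X ^ n - 1 : F[X])) := by
  have hmonic : (X ^ n - 1 : F[X]).Monic := by simpa using monic_X_pow_sub_C (1 : F) hn
  have := hmonic.finite_adjoinRoot
  exact Module.finite_of_finite F

theorem root_pow_eq_one : AdjoinRoot.root (X ^ n - 1 : F[X]) ^ n = 1 := by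
  rw [← sub_eq_zero, ← AdjoinRoot.mk_X, ← map_pow, ← map_one (AdjoinRoot.mk _), ← map_sub,
    AdjoinRoot.mk_self]

theorem apply_apply_eq_self_of_apply_root
    {σ : AdjoinRoot (X ^ n - 1 : F[X]) →ₐ[F] AdjoinRoot (X ^ n - 1 : F[X])} (hn : n ≠ 0)
    (hσ : σ (AdjoinRoot.root _) = AdjoinRoot.root _ ^ (n - 1))
    (r : AdjoinRoot (X ^ n - 1 : F[X])) : σ (σ r) = r := by
  have hmod : (n - 1) * (n - 1) ≡ 1 [MOD n] := by
    rw [← ZMod.natCast_eq_natCast_iff]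
    push_cast [Nat.cast_sub (Nat.one_le_iff_ne_zero.mpr hn), ZMod.natCast_self]
    ring
  have : σ.comp σ = AlgHom.id F _ := AdjoinRoot.algHom_ext <| by
    rw [AlgHom.comp_apply, hσ, map_pow, hσ, ← pow_mul, pow_eq_pow_of_modEq hmod root_pow_eq_one,
      pow_one, AlgHom.id_apply]
  exact AlgHom.congr_fun this r

end CyclicAlgebra

section MatrixEmbedding

variable {F R : Type*} [CommSemiring F] [CommRing R] [Algebra F R] (σ : R ≃ₐ[F] R)

theorem cdMul_mk_zero (a b : R) : cdMul σ (a, 0) (b, 0) = (a * b, 0) := by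
  simp [cdMul]

theorem cdMul_mk_zero_comm {c : R} (hc : σ c = c) (z : R × R) :
    cdMul σ (c, 0) z = cdMul σ z (c, 0) := by
  simp only [cdMul, hc, map_zero, mul_zero, zero_mul, sub_zero, add_zero, Prod.mk.injEq]
  constructor <;> ring

variable {ε : R} (hε : IsIdempotentElem ε)

/-- The matrix units go to `E₁₁ ↦ (ε, 0)`, `E₂₂ ↦ (σ ε, 0)`, `E₁₂ ↦ (0, ε)`, `E₂₁ ↦ (0, -σ ε)`. -/
def matrixEmbedding : Matrix (Fin 2) (Fin 2) (R ⧸ Ideal.span {1 - ε}) →ₗ[F] R × R where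
  toFun m := (quotSection hε (m 0 0) + σ (quotSection hε (m 1 1)),
    quotSection hε (m 0 1) - σ (quotSection hε (m 1 0)))
  map_add' m m' := by
    simp only [Matrix.add_apply, map_add, Prod.mk_add_mk, Prod.mk.injEq]
    constructor <;> ring
  map_smul' c m := by
    simp [smul_add, smul_sub]

def matrixProjection (z : R × R) : Matrix (Fin 2) (Fin 2) (R ⧸ Ideal.span {1 - ε}) :=
  !![Ideal.Quotient.mk _ z.1, Ideal.Quotient.mk _ z.2;
    Ideal.Quotient.mk _ (-σ z.2), Ideal.Quotient.mk _ (σ z.1)]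

variable {σ}

theorem quotSection_mul_apply_quotSection (horth : ε * σ ε = 0)
    (k k' : R ⧸ Ideal.span {1 - ε}) : quotSection hε k * σ (quotSection hε k') = 0 := by
  rw [← mul_quotSection hε k, ← mul_quotSection hε k', map_mul]
  linear_combination (quotSection hε k * σ (quotSection hε k')) * horth

theorem mk_apply_quotSection (horth : ε * σ ε = 0) (k : R ⧸ Ideal.span {1 - ε}) :
    Ideal.Quotient.mk (Ideal.span {1 - ε}) (σ (quotSection hε k)) = 0 := by
  rw [← map_zero (Ideal.Quotient.mk (Ideal.span {1 - ε})), mk_eq_mk_iff hε, mul_zero]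
  simpa using quotSection_mul_apply_quotSection hε horth 1 k

theorem matrixProjection_matrixEmbedding (hσ : ∀ r, σ (σ r) = r) (horth : ε * σ ε = 0)
    (m : Matrix (Fin 2) (Fin 2) (R ⧸ Ideal.span {1 - ε})) :
    matrixProjection σ (matrixEmbedding σ hε m) = m := by
  ext i j
  fin_cases i <;> fin_cases j <;>
    simp [matrixProjection, matrixEmbedding, hσ, mk_apply_quotSection hε horth]

theorem matrixEmbedding_matrixProjection (hσ : ∀ r, σ (σ r) = r) (z : R × R) :
    matrixEmbedding σ hε (matrixProjection σ z) = cdMul σ z (ε + σ ε, 0) := by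
  simp only [matrixEmbedding, matrixProjection, cdMul, LinearMap.coe_mk, AddHom.coe_mk,
    Matrix.of_apply, Matrix.cons_val', Matrix.cons_val_zero, Matrix.cons_val_one,
    Matrix.empty_val', Matrix.cons_val_fin_one, quotSection_mk, map_mul, map_neg, map_add, hσ,
    map_zero, Prod.mk.injEq]
  constructor <;> ring

theorem matrixEmbedding_injective (hσ : ∀ r, σ (σ r) = r) (horth : ε * σ ε = 0) :
    Function.Injective (matrixEmbedding σ hε) :=
  Function.LeftInverse.injective (matrixProjection_matrixEmbedding hε hσ horth)

theorem range_matrixEmbedding (hσ : ∀ r, σ (σ r) = r) (horth : ε * σ ε = 0) :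
    Set.range (matrixEmbedding σ hε) = Set.range fun z => cdMul σ z (ε + σ ε, 0) := by
  refine Set.Subset.antisymm ?_ ?_
  · rintro _ ⟨m, rfl⟩
    refine ⟨matrixEmbedding σ hε m, ?_⟩
    dsimp only
    rw [← matrixEmbedding_matrixProjection hε hσ, matrixProjection_matrixEmbedding hε hσ horth]
  · rintro _ ⟨z, rfl⟩
    exact ⟨matrixProjection σ z, matrixEmbedding_matrixProjection hε hσ z⟩

theorem matrixEmbedding_one : matrixEmbedding σ hε 1 = (ε + σ ε, 0) := by
  simp [matrixEmbedding]

theorem matrixEmbedding_mul (hσ : ∀ r, σ (σ r) = r) (horth : ε * σ ε = 0)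
    (m m' : Matrix (Fin 2) (Fin 2) (R ⧸ Ideal.span {1 - ε})) :
    matrixEmbedding σ hε (m * m') =
      cdMul σ (matrixEmbedding σ hε m) (matrixEmbedding σ hε m') := by
  have hv := quotSection_mul_apply_quotSection hε horth
  have hv' : ∀ k k', σ (quotSection hε k) * quotSection hε k' = 0 := fun k k' => by
    rw [mul_comm]; exact hv k' k
  simp only [matrixEmbedding, LinearMap.coe_mk, AddHom.coe_mk, cdMul, Matrix.mul_apply,
    Fin.sum_univ_two, map_add, quotSection_mul, map_sub, map_mul, hσ, Prod.mk.injEq]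
  constructor
  · linear_combination -hv (m 0 0) (m' 1 1) - hv' (m 1 1) (m' 0 0) +
      hv (m 0 1) (m' 0 1) + hv' (m 1 0) (m' 1 0)
  · linear_combination hv (m 0 0) (m' 1 0) - hv' (m 1 1) (m' 0 1) -
      hv (m 0 1) (m' 0 0) + hv' (m 1 0) (m' 1 1)

theorem matrixEmbedding_adjugate (hσ : ∀ r, σ (σ r) = r)
    (m : Matrix (Fin 2) (Fin 2) (R ⧸ Ideal.span {1 - ε})) :
    (σ (matrixEmbedding σ hε m).1, -(matrixEmbedding σ hε m).2) =
      matrixEmbedding σ hε m.adjugate := by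
  simp only [matrixEmbedding, LinearMap.coe_mk, AddHom.coe_mk, Matrix.adjugate_fin_two,
    Matrix.of_apply, Matrix.cons_val', Matrix.cons_val_zero, Matrix.cons_val_one,
    Matrix.empty_val', Matrix.cons_val_fin_one, map_add, map_neg, hσ, Prod.mk.injEq]
  constructor <;> ring

end MatrixEmbedding

theorem consta_dihedral_stmt3_general {F : Type*} [Field F] [Fintype F] (q : ℕ)
    (hq : q = Fintype.card F) (n : ℕ)
    (hcop : Nat.Coprime n q)
    (σ : AdjoinRoot (X ^ n - 1 : F[X]) ≃ₐ[F] AdjoinRoot (X ^ n - 1 : F[X]))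
    (hσ : σ (AdjoinRoot.root _) = (AdjoinRoot.root _) ^ (n - 1))
    (ε : AdjoinRoot (X ^ n - 1 : F[X])) (hprim : IsPrimitiveIdem ε) (hε : σ ε ≠ ε) :
    (cdMul (⇑σ) (ε + σ ε, 0) (ε + σ ε, 0) = (ε + σ ε, 0) ∧
      ∀ z, cdMul (⇑σ) (ε + σ ε, 0) z = cdMul (⇑σ) z (ε + σ ε, 0)) ∧
    Finite (AdjoinRoot (X ^ n - 1 : F[X]) ⧸ Ideal.span {1 - ε}) ∧
    IsField (AdjoinRoot (X ^ n - 1 : F[X]) ⧸ Ideal.span {1 - ε}) ∧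
    ∃ Φ : Matrix (Fin 2) (Fin 2) (AdjoinRoot (X ^ n - 1 : F[X]) ⧸ Ideal.span {1 - ε})
        →ₗ[F] AdjoinRoot (X ^ n - 1 : F[X]) × AdjoinRoot (X ^ n - 1 : F[X]),
      Function.Injective Φ ∧
      Φ 1 = (ε + σ ε, 0) ∧
      (∀ m m', Φ (m * m') = cdMul (⇑σ) (Φ m) (Φ m')) ∧
      Set.range Φ = Set.range (fun z => cdMul (⇑σ) z (ε + σ ε, 0)) ∧
      (∀ m, (σ (Φ m).1, -(Φ m).2) = Φ m.adjugate) ∧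
      ∀ a b c d : AdjoinRoot (X ^ n - 1 : F[X]) ⧸ Ideal.span {1 - ε},
        (σ (Φ !![a, b; c, d]).1, -(Φ !![a, b; c, d]).2) = Φ !![d, -b; -c, a] := by
  subst hq
  have hnF : (n : F) ≠ 0 := natCast_ne_zero_of_coprime_card hcop
  have hn : n ≠ 0 := by rintro rfl; exact hnF Nat.cast_zero
  have hσσ : ∀ r, σ (σ r) = r := apply_apply_eq_self_of_apply_root (σ := σ.toAlgHom) hn hσ
  have horth : ε * σ ε = 0 := hprim.mul_apply_eq_zero (σ := σ.toRingHom) hσσ hε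
  have := isReduced_adjoinRoot_X_pow_sub_one hnF
  have := finite_adjoinRoot_X_pow_sub_one (F := F) hn
  have := hprim.nontrivial_quotient
  have := isReduced_quotient_span_one_sub hprim.1
  have hK : Finite (AdjoinRoot (X ^ n - 1 : F[X]) ⧸ Ideal.span {1 - ε}) :=
    Finite.of_surjective _ Ideal.Quotient.mk_surjective
  have hidem : IsIdempotentElem (ε + σ ε) :=
    hprim.1.add (hprim.1.map σ) (by rw [mul_comm (σ ε), horth, add_zero])
  have hfixed : σ (ε + σ ε) = ε + σ ε := by rw [map_add, hσσ, add_comm]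
  refine ⟨⟨by rw [cdMul_mk_zero, hidem.eq], cdMul_mk_zero_comm σ hfixed⟩, hK,
    isField_of_forall_isIdempotentElem fun _ => hprim.eq_zero_or_one_of_isIdempotentElem_quotient,
    matrixEmbedding σ hprim.1, matrixEmbedding_injective hprim.1 hσσ horth,
    matrixEmbedding_one hprim.1, matrixEmbedding_mul hprim.1 hσσ horth,
    range_matrixEmbedding hprim.1 hσσ horth, matrixEmbedding_adjugate hprim.1 hσσ,
    fun a b c d => ?_⟩
  rw [← Matrix.adjugate_fin_two_of]
  exact matrixEmbedding_adjugate hprim.1 hσσ _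

/-- Let `ε` be a primitive idempotent of `R_n` with `σ(ε) ≠ ε`, and set
`e = (ε,0)`, `ē = (σ(ε),0) ∈ A_n`. Then `e + ē` is a central idempotent of `A_n`;
`K := R_n/(1−ε)R_n` is a finite field; and there is an injective `F`-linear multiplicative
map `Φ : M₂(K) → A_n` with `Φ(I₂) = e + ē`, whose image is the two-sided ideal
`A_n(e + ē)`, and which intertwines the bar map `(a,b) ↦ (σ(a), −b)` of `A_n` with the
adjugate of matrices. -/
theorem consta_dihedral_stmt3 {F : Type*} [Field F] [Fintype F] (q : ℕ)
    (hq : q = Fintype.card F) (n : ℕ) (hn : 1 < n) (hodd : Odd n)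
    (hcop : Nat.Coprime n q)
    (σ : AdjoinRoot (X ^ n - 1 : F[X]) ≃ₐ[F] AdjoinRoot (X ^ n - 1 : F[X]))
    (hσ : σ (AdjoinRoot.root _) = (AdjoinRoot.root _) ^ (n - 1))
    (ε : AdjoinRoot (X ^ n - 1 : F[X])) (hprim : IsPrimitiveIdem ε) (hε : σ ε ≠ ε) :
    (cdMul (⇑σ) (ε + σ ε, 0) (ε + σ ε, 0) = (ε + σ ε, 0) ∧
      ∀ z, cdMul (⇑σ) (ε + σ ε, 0) z = cdMul (⇑σ) z (ε + σ ε, 0)) ∧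
    Finite (AdjoinRoot (X ^ n - 1 : F[X]) ⧸ Ideal.span {1 - ε}) ∧
    IsField (AdjoinRoot (X ^ n - 1 : F[X]) ⧸ Ideal.span {1 - ε}) ∧
    ∃ Φ : Matrix (Fin 2) (Fin 2) (AdjoinRoot (X ^ n - 1 : F[X]) ⧸ Ideal.span {1 - ε})
        →ₗ[F] AdjoinRoot (X ^ n - 1 : F[X]) × AdjoinRoot (X ^ n - 1 : F[X]),
      Function.Injective Φ ∧
      Φ 1 = (ε + σ ε, 0) ∧
      (∀ m m', Φ (m * m') = cdMul (⇑σ) (Φ m) (Φ m')) ∧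
      Set.range Φ = Set.range (fun z => cdMul (⇑σ) z (ε + σ ε, 0)) ∧
      (∀ m, (σ (Φ m).1, -(Φ m).2) = Φ m.adjugate) ∧
      ∀ a b c d : AdjoinRoot (X ^ n - 1 : F[X]) ⧸ Ideal.span {1 - ε},
        (σ (Φ !![a, b; c, d]).1, -(Φ !![a, b; c, d]).2) = Φ !![d, -b; -c, a] :=
  consta_dihedral_stmt3_general q hq n hcop σ hσ ε hprim hε

end CDC
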